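/- arXiv:2307.08102 — 2 statements merged into one kernel-verified Lean document; each statement's English description precedes it below -/
import Mathlib

section
/- Let m ∈ ℕ, k ∈ {k_{m−1}, …, k_m−1} and s ∈ {0,1,2}^k. Then for every n ≥ m: l(G^1(s,n)) = r(J_s) − ∑_{i=m}^n (d_{k_i−1} − d_{k_i}) and r(G^0(s,n)) = l(J_s) + ∑_{i=m}^n (d_{k_i−1} − d_{k_i}). -/
open Pointwise MeasureTheory

namespace CCS

/-- `dSeq a n` is the common length `d_n = ∏_{i=1}^n (1 - a_i)/2` of the intervals of the
`n`-th step of the construction of the central Cantor set `C(a)` (`d_0 = 1`).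
The sequence `a` is indexed from `1`; the value `a 0` is irrelevant. -/
noncomputable def dSeq (a : ℕ → ℝ) (n : ℕ) : ℝ :=
  ∏ i ∈ Finset.Icc 1 n, ((1 - a i) / 2)

/-- Left endpoint of the interval `I_t`, `t ∈ {0,1}^n` (coded as a list, the paper's
`t_j` being `t.getD (j-1) 0`): `l(I_t) = ∑_{j=1}^n t_j (d_{j-1} - d_j)`. -/
noncomputable def Il (a : ℕ → ℝ) (t : List ℕ) : ℝ :=
  ∑ j ∈ Finset.range t.length, (t.getD j 0 : ℝ) * (dSeq a j - dSeq a (j + 1))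

/-- The `n`-th step `C_n(a)` of the construction of the central Cantor set:
the union of the intervals `I_t = [l(I_t), l(I_t) + d_n]` over `t ∈ {0,1}^n`. -/
noncomputable def cantorStep (a : ℕ → ℝ) (n : ℕ) : Set ℝ :=
  ⋃ t ∈ {t : List ℕ | t.length = n ∧ ∀ j ∈ t, j ≤ 1},
    Set.Icc (Il a t) (Il a t + dSeq a n)

/-- The central Cantor set `C(a) = ⋂ₙ C_n(a)`. -/
noncomputable def cantorSet (a : ℕ → ℝ) : Set ℝ := ⋂ n, cantorStep a n

/-- Left endpoint of the interval `J_s = I_t - I_p`, for `s ∈ {0,1,2}^n`: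
`l(J_s) = -1 + ∑_{j=1}^n s_j (d_{j-1} - d_j)`. -/
noncomputable def Jl (a : ℕ → ℝ) (s : List ℕ) : ℝ :=
  -1 + ∑ j ∈ Finset.range s.length, (s.getD j 0 : ℝ) * (dSeq a j - dSeq a (j + 1))

/-- Right endpoint of `J_s`: `r(J_s) = l(J_s) + 2 d_n`. -/
noncomputable def Jr (a : ℕ → ℝ) (s : List ℕ) : ℝ :=
  Jl a s + 2 * dSeq a s.length

/-- The interval `J_s`. -/
noncomputable def Jset (a : ℕ → ℝ) (s : List ℕ) : Set ℝ := Set.Icc (Jl a s) (Jr a s)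

/-- Left endpoint of the gap `G^i_s` (`i = 0`: left gap, `i = 1`: right gap) of `J_s`. -/
noncomputable def Gl (a : ℕ → ℝ) (i : ℕ) (s : List ℕ) : ℝ :=
  Jl a s + (i : ℝ) * (dSeq a s.length - dSeq a (s.length + 1)) + 2 * dSeq a (s.length + 1)

/-- Right endpoint of the gap `G^i_s`. -/
noncomputable def Gr (a : ℕ → ℝ) (i : ℕ) (s : List ℕ) : ℝ :=
  Jl a s + ((i : ℝ) + 1) * (dSeq a s.length - dSeq a (s.length + 1))

/-- The gap `G^i_s ⊆ J_s`, an open interval. -/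
noncomputable def Gset (a : ℕ → ℝ) (i : ℕ) (s : List ℕ) : Set ℝ :=
  Set.Ioo (Gl a i s) (Gr a i s)

/-- `N(0,s) = max {j : s_j > 0}`, `N(1,s) = max {j : s_j < 2}` (1-based, `max ∅ = 0`). -/
noncomputable def Nidx (i : ℕ) (s : List ℕ) : ℕ :=
  sSup {j | 1 ≤ j ∧ j ≤ s.length ∧
    (if i = 0 then 0 < s.getD (j - 1) 0 else s.getD (j - 1) 0 < 2)}

/-- The family `𝒢^{i0}_{s0}(n)` of (indices of) gaps of rank `n`, for
`s0 ∈ {0,1,2}^{k_m - 1}`; a gap `G^i_s` is coded by the pair `(i, s)`.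
`𝒢^{i0}_{s0}(m) = {G^{i0}_{s0}}` and for `n > m`,
`𝒢^{i0}_{s0}(n)` consists of the gap `Ḡ^{i0}_{s0}(n)` together with the gaps
`Ḡ^1_{t^j}(n)`, `Ḡ^0_{t^(j+1)}(n)` for all `G^j_t ∈ 𝒢^{i0}_{s0}(l)`, `m ≤ l < n`. -/
def gapFamily (k : ℕ → ℕ) (i0 : ℕ) (s0 : List ℕ) (m : ℕ) (n : ℕ) : Set (ℕ × List ℕ) :=
  if n ≤ m then {(i0, s0)}
  else
    {(i0, s0 ++ List.replicate (k n - k m) (2 * i0))} ∪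
      ⋃ (l : ℕ) (_ : m ≤ l) (hl : l < n),
        ⋃ p ∈ gapFamily k i0 s0 m l,
          ({(1, p.2 ++ p.1 :: List.replicate (k n - k l - 1) 2),
            (0, p.2 ++ (p.1 + 1) :: List.replicate (k n - k l - 1) 0)} : Set (ℕ × List ℕ))
termination_by n
decreasing_by exact hl

/-- The family `𝒢^{i0}_{s0} = ⋃_{n ≥ m} 𝒢^{i0}_{s0}(n)`. -/
def gapFamilyAll (k : ℕ → ℕ) (i0 : ℕ) (s0 : List ℕ) (m : ℕ) : Set (ℕ × List ℕ) :=
  ⋃ (n : ℕ) (_ : m ≤ n), gapFamily k i0 s0 m n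

/-- The family `𝒢_t := 𝒢^0_{t ++ 0^{(k_m - |t| - 1)}} ∪ 𝒢^1_{t ++ 2^{(k_m - |t| - 1)}}`
for `t ∈ {0,1,2}^k` with `k_{m-1} ≤ k < k_m`. -/
def gapFamilyT (k : ℕ → ℕ) (m : ℕ) (t : List ℕ) : Set (ℕ × List ℕ) :=
  gapFamilyAll k 0 (t ++ List.replicate (k m - t.length - 1) 0) m ∪
    gapFamilyAll k 1 (t ++ List.replicate (k m - t.length - 1) 2) m

/-- The union `⋃ 𝒢` of a family of (indices of) gaps, as a subset of `ℝ`. -/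
noncomputable def gapUnion (a : ℕ → ℝ) (G : Set (ℕ × List ℕ)) : Set ℝ :=
  ⋃ p ∈ G, Gset a p.1 p.2

/-- `padSeq k c s m n` is the index of the gap `G^i(s,n)` (for `c = 2i`):
`s ++ c^{(k_m - |s| - 1)} ++ 1 ++ c^{(k_{m+1} - k_m - 1)} ++ 1 ++ ⋯ ++ 1 ++ c^{(k_n - k_{n-1} - 1)}`. -/
def padSeq (k : ℕ → ℕ) (c : ℕ) (s : List ℕ) (m : ℕ) : ℕ → List ℕ
  | 0 => s ++ List.replicate (k m - s.length - 1) c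
  | n + 1 =>
    if n + 1 ≤ m then s ++ List.replicate (k m - s.length - 1) c
    else padSeq k c s m n ++ 1 :: List.replicate (k (n + 1) - k n - 1) c

/-- `δ_n := min {3d_i - d_{i-1} : k_{n-1} + 1 ≤ i ≤ k_n - 1}` (as an element of `EReal`,
so that `min ∅ = ⊤ = ∞`). -/
noncomputable def deltaMin (a : ℕ → ℝ) (k : ℕ → ℕ) (n : ℕ) : EReal :=
  sInf ((fun i => ((3 * dSeq a i - dSeq a (i - 1) : ℝ) : EReal)) ''
    (Set.Icc (k (n - 1) + 1) (k n - 1)))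

/-- `Δ_n := max {3d_i - d_{i-1} : k_{n-1} + 1 ≤ i ≤ k_n - 1}` (`max ∅ = ⊥ = -∞`). -/
noncomputable def deltaMax (a : ℕ → ℝ) (k : ℕ → ℕ) (n : ℕ) : EReal :=
  sSup ((fun i => ((3 * dSeq a i - dSeq a (i - 1) : ℝ) : EReal)) ''
    (Set.Icc (k (n - 1) + 1) (k n - 1)))

/-- `m_n := min { δ_n - (d_{k_n - 1} - d_{k_n}), 4 d_{k_n} - Δ_n }`. -/
noncomputable def mSeq (a : ℕ → ℝ) (k : ℕ → ℕ) (n : ℕ) : EReal :=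
  min (deltaMin a k n - ((dSeq a (k n - 1) - dSeq a (k n) : ℝ) : EReal))
    (((4 * dSeq a (k n) : ℝ) : EReal) - deltaMax a k n)

/-- `∑_{i=n+1}^∞ (d_{k_i - 1} - d_{k_i})`. -/
noncomputable def tailSum (a : ℕ → ℝ) (k : ℕ → ℕ) (n : ℕ) : ℝ :=
  ∑' i : ℕ, (dSeq a (k (n + 1 + i) - 1) - dSeq a (k (n + 1 + i)))

/-- Condition `(*)`: `m_n ≥ 2 ∑_{i=n+1}^∞ (d_{k_i - 1} - d_{k_i})` for every `n ∈ ℕ`. -/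
def condStar (a : ℕ → ℝ) (k : ℕ → ℕ) : Prop :=
  ∀ n : ℕ, 1 ≤ n → ((2 * tailSum a k n : ℝ) : EReal) ≤ mSeq a k n

/-- `(k_n)_{n ≥ 1}` is the increasing enumeration of all indices greater than `k 0 = k₀`
at which `a` exceeds `1/3`. -/
def IsGapEnum (a : ℕ → ℝ) (k : ℕ → ℕ) : Prop :=
  StrictMono k ∧ (∀ n, 1 ≤ n → k 0 < k n ∧ 1 / 3 < a (k n)) ∧
    (∀ j, k 0 < j → 1 / 3 < a j → ∃ n, 1 ≤ n ∧ k n = j)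

/-- `G` is a gap of `E`: a bounded connected component of `ℝ ∖ E`. -/
def IsGapOf (E G : Set ℝ) : Prop :=
  (∃ x ∉ E, G = connectedComponentIn Eᶜ x) ∧ Bornology.IsBounded G

/-- `C` is a proper (nontrivial) connected component of `E`. -/
def IsProperComponentOf (E C : Set ℝ) : Prop :=
  (∃ x ∈ E, C = connectedComponentIn E x) ∧ C.Nontrivial

/-- `E` is a Cantorval: a perfect set with infinitely many gaps such that both endpoints
of every gap are accumulated both by gaps and by proper components of `E`. -/
def IsCantorval (E : Set ℝ) : Prop :=
  Perfect E ∧ {G : Set ℝ | IsGapOf E G}.Infinite ∧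
    ∀ G, IsGapOf E G → ∀ p, p = sInf G ∨ p = sSup G →
      (∀ ε > 0, ∃ G', IsGapOf E G' ∧ G' ≠ G ∧ G' ⊆ Set.Ioo (p - ε) (p + ε)) ∧
      (∀ ε > 0, ∃ C, IsProperComponentOf E C ∧ C ⊆ Set.Ioo (p - ε) (p + ε))

/-- `J_s` and `J_u` (of length `k_m - 1`) are associated:
`N := N(0,s) = N(1,u) ∈ {k_{m-1}+1, …, k_m - 1}`, `s|(N-1) = u|(N-1)`, `u_N = s_N - 1`.
Then `J_u` is the interval covering `𝒢^0_s` and `J_s` is the interval covering `𝒢^1_u`. -/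
def Associated (k : ℕ → ℕ) (m : ℕ) (s u : List ℕ) : Prop :=
  s.length = k m - 1 ∧ u.length = k m - 1 ∧
    Nidx 0 s = Nidx 1 u ∧
    k (m - 1) + 1 ≤ Nidx 0 s ∧ Nidx 0 s ≤ k m - 1 ∧
    s.take (Nidx 0 s - 1) = u.take (Nidx 0 s - 1) ∧
    u.getD (Nidx 0 s - 1) 0 = s.getD (Nidx 0 s - 1) 0 - 1

/-- `G^i_g ⊂_* J_v`: the gap `G^i_g` is covered by the interval `J_v`, i.e. `G^i_g`
belongs to a family `𝒢^0_w` (resp. `𝒢^1_w`) such that `J_v` is the interval covering it. -/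
def CoversGap (k : ℕ → ℕ) (i : ℕ) (g : List ℕ) (v : List ℕ) : Prop :=
  ∃ m w, 1 ≤ m ∧
    ((Associated k m w v ∧ (i, g) ∈ gapFamilyAll k 0 w m) ∨
      (Associated k m v w ∧ (i, g) ∈ gapFamilyAll k 1 w m))

/-- The achievement set `E(x) = {∑_{j ∈ A} x_j : A ⊆ ℕ}` of a series (indexed from `1`). -/
def achievementSet (x : ℕ → ℝ) : Set ℝ :=
  {y | ∃ A : Set ℕ, A ⊆ {n | 1 ≤ n} ∧ HasSum (A.indicator x) y}

/-- Partial sum with an offset, used to compute `Jl` of appended lists. -/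
noncomputable def Ssum (a : ℕ → ℝ) (u : List ℕ) (off : ℕ) : ℝ :=
  ∑ j ∈ Finset.range u.length, (u.getD j 0 : ℝ) * (dSeq a (off + j) - dSeq a (off + j + 1))

lemma Jl_append (a : ℕ → ℝ) (t r : List ℕ) :
    Jl a (t ++ r) = Jl a t + Ssum a r t.length := by
  unfold Jl Ssum
  rw [List.length_append, Finset.sum_range_add]
  have h1 : ∀ j ∈ Finset.range t.length,
      ((t ++ r).getD j 0 : ℝ) * (dSeq a j - dSeq a (j + 1))
        = (t.getD j 0 : ℝ) * (dSeq a j - dSeq a (j + 1)) := by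
    intro j hj
    rw [List.getD_append _ _ _ j (Finset.mem_range.mp hj)]
  have h2 : ∀ j ∈ Finset.range r.length,
      ((t ++ r).getD (t.length + j) 0 : ℝ)
          * (dSeq a (t.length + j) - dSeq a (t.length + j + 1))
        = (r.getD j 0 : ℝ) * (dSeq a (t.length + j) - dSeq a (t.length + j + 1)) := by
    intro j hj
    rw [List.getD_append_right _ _ _ _ (Nat.le_add_right _ _), Nat.add_sub_cancel_left]
  rw [Finset.sum_congr rfl h1, Finset.sum_congr rfl h2]
  ring

lemma Ssum_cons (a : ℕ → ℝ) (v : ℕ) (u : List ℕ) (off : ℕ) :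
    Ssum a (v :: u) off
      = (v : ℝ) * (dSeq a off - dSeq a (off + 1)) + Ssum a u (off + 1) := by
  unfold Ssum
  rw [List.length_cons, Finset.sum_range_succ']
  simp only [List.getD_cons_zero, List.getD_cons_succ, Nat.add_zero]
  rw [add_comm]
  congr 1
  apply Finset.sum_congr rfl
  intro j hj
  have h1 : off + (j + 1) = off + 1 + j := by omega
  have h2 : off + (j + 1) + 1 = off + 1 + j + 1 := by omega
  rw [h1]

lemma Ssum_replicate (a : ℕ → ℝ) (c : ℕ) (r off : ℕ) :
    Ssum a (List.replicate r c) off = (c : ℝ) * (dSeq a off - dSeq a (off + r)) := by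
  induction r generalizing off with
  | zero => simp [Ssum]
  | succ n ih =>
    rw [List.replicate_succ, Ssum_cons, ih]
    have : off + 1 + n = off + (n + 1) := by omega
    rw [this]; ring

lemma padSeq_of_le (k : ℕ → ℕ) (c : ℕ) (s : List ℕ) (m n : ℕ) (h : n ≤ m) :
    padSeq k c s m n = s ++ List.replicate (k m - s.length - 1) c := by
  cases n with
  | zero => rfl
  | succ n => rw [padSeq, if_pos h]

lemma padSeq_succ_of_ge (k : ℕ → ℕ) (c : ℕ) (s : List ℕ) (m n : ℕ) (h : m ≤ n) :
    padSeq k c s m (n + 1)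
      = padSeq k c s m n ++ 1 :: List.replicate (k (n + 1) - k n - 1) c := by
  rw [padSeq, if_neg (by omega)]

lemma padSeq_length (k : ℕ → ℕ) (c : ℕ) (s : List ℕ) (m : ℕ)
    (hmono : StrictMono k) (hlen : s.length + 1 ≤ k m) :
    ∀ n, m ≤ n → (padSeq k c s m n).length = k n - 1 := by
  intro n hn
  induction n, hn using Nat.le_induction with
  | base =>
    rw [padSeq_of_le k c s m m le_rfl]
    simp only [List.length_append, List.length_replicate]
    omega
  | succ n hn ih =>
    rw [padSeq_succ_of_ge k c s m n hn]
    simp only [List.length_append, List.length_cons, List.length_replicate]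
    have := hmono (Nat.lt_succ_self n)
    have h1 : k m ≤ k n := hmono.le_iff_le.mpr hn
    have h2 : k (n + 1) = k n.succ := rfl
    omega


/-- Lemma: `l(G¹(s,n)) = r(J_s) - ∑_{i=m}^n (d_{k_i-1} - d_{k_i})` and
`r(G⁰(s,n)) = l(J_s) + ∑_{i=m}^n (d_{k_i-1} - d_{k_i})` for every `n ≥ m`. -/
theorem gap_endpoints_formula (a : ℕ → ℝ) (k : ℕ → ℕ)
    (ha : ∀ n, 1 ≤ n → 0 < a n ∧ a n < 1)
    (hinf : {n : ℕ | 1 ≤ n ∧ 1 / 3 < a n}.Infinite)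
    (hk0 : a (k 0 + 1) < 1 / 3)
    (hk : IsGapEnum a k)
    (m : ℕ) (hm : 1 ≤ m) (kk : ℕ) (hkk1 : k (m - 1) ≤ kk) (hkk2 : kk ≤ k m - 1)
    (s : List ℕ) (hs2 : ∀ x ∈ s, x ≤ 2) (hslen : s.length = kk) :
    ∀ n, m ≤ n →
      Gl a 1 (padSeq k 2 s m n)
          = Jr a s - ∑ i ∈ Finset.Icc m n, (dSeq a (k i - 1) - dSeq a (k i)) ∧
        Gr a 0 (padSeq k 0 s m n)
          = Jl a s + ∑ i ∈ Finset.Icc m n, (dSeq a (k i - 1) - dSeq a (k i))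
    := by
  obtain ⟨hmono, hpos, -⟩ := hk
  have hkm1 : 1 ≤ k m := by have := (hpos m hm).1; omega
  have hlen : s.length + 1 ≤ k m := by omega
  intro n hn
  induction n, hn using Nat.le_induction with
  | base =>
    have hL : ∀ c : ℕ, (s ++ List.replicate (k m - s.length - 1) c).length = k m - 1 := by
      intro c
      simp only [List.length_append, List.length_replicate]
      omega
    have hadd : s.length + (k m - s.length - 1) = k m - 1 := by omega
    have hmm : k m - 1 + 1 = k m := by omega
    rw [Finset.Icc_self, Finset.sum_singleton]
    constructor
    · rw [padSeq_of_le k 2 s m m le_rfl]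
      unfold Gl Jr
      rw [Jl_append, Ssum_replicate, hL 2, hmm, hadd, hslen]
      push_cast
      ring
    · rw [padSeq_of_le k 0 s m m le_rfl]
      unfold Gr
      rw [Jl_append, Ssum_replicate, hL 0, hmm, hadd]
      push_cast
      ring
  | succ n hn ih =>
    obtain ⟨ih1, ih2⟩ := ih
    have hlenP2 : (padSeq k 2 s m n).length = k n - 1 := padSeq_length k 2 s m hmono hlen n hn
    have hlenP0 : (padSeq k 0 s m n).length = k n - 1 := padSeq_length k 0 s m hmono hlen n hn
    have hkn1 : 1 ≤ k n := le_trans hkm1 (hmono.le_iff_le.mpr hn)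
    have hknlt : k n < k (n + 1) := hmono (Nat.lt_succ_self n)
    have hsum : ∑ i ∈ Finset.Icc m (n + 1), (dSeq a (k i - 1) - dSeq a (k i))
        = ∑ i ∈ Finset.Icc m n, (dSeq a (k i - 1) - dSeq a (k i))
          + (dSeq a (k (n + 1) - 1) - dSeq a (k (n + 1))) :=
      Finset.sum_Icc_succ_top (by omega) _
    have e1 : k n - 1 + 1 = k n := by omega
    have e2 : k n + (k (n + 1) - k n - 1) = k (n + 1) - 1 := by omega
    have e4 : k n - 1 + (k (n + 1) - k n - 1 + 1) = k (n + 1) - 1 := by omega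
    have e3 : k (n + 1) - 1 + 1 = k (n + 1) := by omega
    have hJl2 : Jl a (padSeq k 2 s m n)
        = Jr a s - (∑ i ∈ Finset.Icc m n, (dSeq a (k i - 1) - dSeq a (k i)))
          - dSeq a (k n - 1) - dSeq a (k n) := by
      unfold Gl at ih1
      rw [hlenP2, e1] at ih1
      push_cast at ih1
      linarith
    have hJl0 : Jl a (padSeq k 0 s m n)
        = Jl a s + (∑ i ∈ Finset.Icc m n, (dSeq a (k i - 1) - dSeq a (k i)))
          - dSeq a (k n - 1) + dSeq a (k n) := by
      unfold Gr at ih2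
      rw [hlenP0, e1] at ih2
      push_cast at ih2
      linarith
    constructor
    · rw [padSeq_succ_of_ge k 2 s m n hn]
      unfold Gl
      rw [Jl_append, Ssum_cons, Ssum_replicate, hlenP2]
      simp only [List.length_append, List.length_cons, List.length_replicate, hlenP2]
      rw [e1, e2, e4, e3, hJl2, hsum]
      push_cast
      ring
    · rw [padSeq_succ_of_ge k 0 s m n hn]
      unfold Gr
      rw [Jl_append, Ssum_cons, Ssum_replicate, hlenP0]
      simp only [List.length_append, List.length_cons, List.length_replicate, hlenP0]
      rw [e1, e2, e4, e3, hJl0, hsum]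
      push_cast
      ring

end CCS
end

section
/- Let m ∈ ℕ, s ∈ {0,1,2}^{k_m−1} and n > m. Then for every gap G ∈ 𝒢^0_s(n), either r(G) ≤ r(G^0(s^0, n)), or l(G^1(s^0, n)) ≤ l(G) < r(G) ≤ r(G^0(s, n)). -/
open Pointwise MeasureTheory

namespace CCS

/-!
Write `R_n = ∑_{m<q≤n} (d_{k_q - 1} - d_{k_q})`. The three reference endpoints in the statement
are `l(J_s) + R_n`, `l(G^0_s) - R_n` and `r(G^0_s) + R_n`. The two gaps of rank `n` created from a
gap `G` of rank `l < n` lie within `d_{k_n - 1} - d_{k_n}` of `G`, just left of `l(G)` or just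
right of `r(G)`, while `R_n ≥ R_l + (d_{k_n - 1} - d_{k_n})`. Hence, by induction on the rank,
every gap of `𝒢^0_s(n)` lies either left of `l(J_s) + R_n` or inside
`[l(G^0_s) - R_n, r(G^0_s) + R_n]`.
Gaps of rank `n` are nondegenerate because `a_{k_n} > 1/3`.
-/

/-- `dStep a j = d_j - d_{j+1}` is the offset `l(J_{s^(c+1)}) - l(J_{s^c})` for `|s| = j`. -/
noncomputable def dStep (a : ℕ → ℝ) (j : ℕ) : ℝ := dSeq a j - dSeq a (j + 1)

noncomputable def rankSum (a : ℕ → ℝ) (k : ℕ → ℕ) (m n : ℕ) : ℝ :=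
  ∑ q ∈ Finset.Ioc m n, dStep a (k q - 1)

section dSeq

variable {a : ℕ → ℝ}

lemma dSeq_succ (n : ℕ) : dSeq a (n + 1) = dSeq a n * ((1 - a (n + 1)) / 2) := by
  rw [dSeq, dSeq, Finset.prod_Icc_succ_top (Nat.le_add_left 1 n)]

variable (ha : ∀ n, 1 ≤ n → 0 < a n ∧ a n < 1)
include ha

lemma dSeq_pos (n : ℕ) : 0 < dSeq a n :=
  Finset.prod_pos fun i hi => by linarith [(ha i (Finset.mem_Icc.mp hi).1).2]

lemma dStep_nonneg (n : ℕ) : 0 ≤ dStep a n := by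
  have hd := dSeq_pos ha n
  have han := (ha (n + 1) (Nat.le_add_left 1 n)).1
  rw [dStep, dSeq_succ]
  nlinarith

lemma three_mul_dSeq_succ_lt {n : ℕ} (h : 1 / 3 < a (n + 1)) :
    3 * dSeq a (n + 1) < dSeq a n := by
  have hd := dSeq_pos ha n
  rw [dSeq_succ]
  nlinarith

end dSeq

section rankSum

variable (a : ℕ → ℝ) (k : ℕ → ℕ) {m n : ℕ}

@[simp]
lemma rankSum_self (m : ℕ) : rankSum a k m m = 0 := by simp [rankSum]

lemma rankSum_succ (h : m ≤ n) :
    rankSum a k m (n + 1) = rankSum a k m n + dStep a (k (n + 1) - 1) := by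
  rw [rankSum, Finset.sum_Ioc_succ_top h, rankSum]

lemma rankSum_eq_dStep_add (h : m < n) :
    rankSum a k m n = dStep a (k (m + 1) - 1) + rankSum a k (m + 1) n := by
  rw [rankSum, ← Finset.sum_Ioc_consecutive _ (Nat.le_add_right m 1) h, Nat.Ioc_succ_singleton,
    Finset.sum_singleton, rankSum]

variable {a} in
lemma rankSum_add_dStep_le (ha : ∀ n, 1 ≤ n → 0 < a n ∧ a n < 1) {l : ℕ}
    (hml : m ≤ l) (hln : l < n) : rankSum a k m l + dStep a (k n - 1) ≤ rankSum a k m n := by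
  unfold rankSum
  rw [← Finset.sum_Ioc_consecutive _ hml hln.le]
  exact add_le_add le_rfl <| Finset.single_le_sum (f := fun q => dStep a (k q - 1))
    (fun q _ => dStep_nonneg ha _) (Finset.mem_Ioc.mpr ⟨hln, le_rfl⟩)

end rankSum

section endpoints

variable (a : ℕ → ℝ)

lemma Jl_append_singleton (s : List ℕ) (c : ℕ) :
    Jl a (s ++ [c]) = Jl a s + c * dStep a s.length := by
  unfold Jl
  rw [List.length_append, List.length_singleton, Finset.sum_range_succ,
    List.getD_append_right _ _ _ _ le_rfl, Nat.sub_self]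
  have hprefix : ∀ j ∈ Finset.range s.length,
      ((s ++ [c]).getD j 0 : ℝ) * (dSeq a j - dSeq a (j + 1)) =
        (s.getD j 0 : ℝ) * (dSeq a j - dSeq a (j + 1)) := fun j hj => by
    rw [List.getD_append _ _ _ _ (Finset.mem_range.mp hj)]
  rw [Finset.sum_congr rfl hprefix, dStep]
  simp only [List.getD_cons_zero]
  ring

lemma Jl_append_replicate (s : List ℕ) (c r : ℕ) :
    Jl a (s ++ List.replicate r c) = Jl a s + c * (dSeq a s.length - dSeq a (s.length + r)) := by
  induction r with
  | zero => simp
  | succ r ih =>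
    rw [List.replicate_succ', ← List.append_assoc, Jl_append_singleton, ih,
      List.length_append, List.length_replicate, dStep]
    ring_nf

lemma Jl_append_cons_replicate (t : List ℕ) (j c r : ℕ) :
    Jl a (t ++ j :: List.replicate r c) =
      Jl a t + j * dStep a t.length +
        c * (dSeq a (t.length + 1) - dSeq a (t.length + 1 + r)) := by
  rw [show t ++ j :: List.replicate r c = (t ++ [j]) ++ List.replicate r c by simp,
    Jl_append_replicate, Jl_append_singleton, List.length_append, List.length_singleton]

lemma Gr_zero_append_replicate_zero (s : List ℕ) (r : ℕ) :
    Gr a 0 (s ++ List.replicate r 0) = Jl a s + dStep a (s.length + r) := by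
  rw [Gr, Jl_append_replicate, List.length_append, List.length_replicate, dStep]
  push_cast
  ring

lemma Gl_one_append_cons_replicate_two (t : List ℕ) (j r : ℕ) :
    Gl a 1 (t ++ j :: List.replicate r 2) = Gl a j t - dStep a (t.length + r + 1) := by
  simp only [Gl, Jl_append_cons_replicate, List.length_append, List.length_cons,
    List.length_replicate, dStep]
  push_cast
  ring_nf

lemma Gr_one_append_cons_replicate_two (t : List ℕ) (j r : ℕ) :
    Gr a 1 (t ++ j :: List.replicate r 2) = Gl a j t - 2 * dSeq a (t.length + r + 2) := by
  simp only [Gl, Gr, Jl_append_cons_replicate, List.length_append, List.length_cons,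
    List.length_replicate, dStep]
  push_cast
  ring_nf

lemma Gl_zero_append_succ_cons_replicate_zero (t : List ℕ) (j r : ℕ) :
    Gl a 0 (t ++ (j + 1) :: List.replicate r 0) = Gr a j t + 2 * dSeq a (t.length + r + 2) := by
  simp only [Gl, Gr, Jl_append_cons_replicate, List.length_append, List.length_cons,
    List.length_replicate, dStep]
  push_cast
  ring_nf

lemma Gr_zero_append_succ_cons_replicate_zero (t : List ℕ) (j r : ℕ) :
    Gr a 0 (t ++ (j + 1) :: List.replicate r 0) = Gr a j t + dStep a (t.length + r + 1) := by
  simp only [Gr, Jl_append_cons_replicate, List.length_append, List.length_cons,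
    List.length_replicate, dStep]
  push_cast
  ring_nf

end endpoints

lemma Gl_lt_Gr {a : ℕ → ℝ} (ha : ∀ n, 1 ≤ n → 0 < a n ∧ a n < 1)
    (i : ℕ) (t : List ℕ) (h : 1 / 3 < a (t.length + 1)) : Gl a i t < Gr a i t := by
  have hwidth : Gr a i t - Gl a i t = dSeq a t.length - 3 * dSeq a (t.length + 1) := by
    rw [Gl, Gr]
    ring
  linarith [three_mul_dSeq_succ_lt ha h]

section padSeq

variable (a : ℕ → ℝ) (k : ℕ → ℕ) (c : ℕ) (s : List ℕ) {m n : ℕ}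

lemma padSeq_self : padSeq k c s m m = s ++ List.replicate (k m - s.length - 1) c := by
  cases m with
  | zero => rfl
  | succ m => rw [padSeq, if_pos le_rfl]

lemma padSeq_succ (h : m ≤ n) :
    padSeq k c s m (n + 1) = padSeq k c s m n ++ 1 :: List.replicate (k (n + 1) - k n - 1) c := by
  rw [padSeq, if_neg (by omega)]

variable {k} (hk : StrictMono k) (hs : s.length < k m)
include hk hs

lemma length_padSeq (h : m ≤ n) : (padSeq k c s m n).length + 1 = k n := by
  induction n, h using Nat.le_induction with
  | base => simp only [padSeq_self, List.length_append, List.length_replicate]; omega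
  | succ n hn ih =>
    simp only [padSeq_succ k c s hn, List.length_append, List.length_cons,
      List.length_replicate]
    have hkn := hk (Nat.lt_add_one n)
    omega

lemma Gr_padSeq_zero (h : m ≤ n) :
    Gr a 0 (padSeq k 0 s m n) = Gr a 0 (padSeq k 0 s m m) + rankSum a k m n := by
  induction n, h using Nat.le_induction with
  | base => simp
  | succ n hn ih =>
    have hlen := length_padSeq 0 s hk hs hn
    have hkn := hk (Nat.lt_add_one n)
    have hstep := Gr_zero_append_succ_cons_replicate_zero a (padSeq k 0 s m n) 0
      (k (n + 1) - k n - 1)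
    rw [zero_add, show (padSeq k 0 s m n).length + (k (n + 1) - k n - 1) + 1 = k (n + 1) - 1 by
      omega] at hstep
    rw [padSeq_succ k 0 s hn, hstep, ih, rankSum_succ a k hn]
    ring

lemma Gl_padSeq_two (h : m ≤ n) :
    Gl a 1 (padSeq k 2 s m n) = Gl a 1 (padSeq k 2 s m m) - rankSum a k m n := by
  induction n, h using Nat.le_induction with
  | base => simp
  | succ n hn ih =>
    have hlen := length_padSeq 2 s hk hs hn
    have hkn := hk (Nat.lt_add_one n)
    have hstep := Gl_one_append_cons_replicate_two a (padSeq k 2 s m n) 1 (k (n + 1) - k n - 1)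
    rw [show (padSeq k 2 s m n).length + (k (n + 1) - k n - 1) + 1 =
      k (n + 1) - 1 by omega] at hstep
    rw [padSeq_succ k 2 s hn, hstep, ih, rankSum_succ a k hn]
    ring

end padSeq

section referenceGaps

variable (a : ℕ → ℝ) {k : ℕ → ℕ} (hk : StrictMono k) {m n : ℕ} {s : List ℕ}
  (hs : s.length + 1 = k m)
include hk hs

lemma Gr_padSeq_zero_eq_Gr_add_rankSum (h : m ≤ n) :
    Gr a 0 (padSeq k 0 s m n) = Gr a 0 s + rankSum a k m n := by
  rw [Gr_padSeq_zero a s hk (by omega) h, padSeq_self,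
    show k m - s.length - 1 = 0 by omega, List.replicate_zero, List.append_nil]

lemma Gr_padSeq_zero_append_zero (h : m < n) :
    Gr a 0 (padSeq k 0 (s ++ [0]) (m + 1) n) = Jl a s + rankSum a k m n := by
  have hkm := hk (Nat.lt_add_one m)
  rw [Gr_padSeq_zero a _ hk (by simp; omega) (show m + 1 ≤ n from h), padSeq_self,
    List.append_assoc, List.singleton_append, ← List.replicate_succ,
    Gr_zero_append_replicate_zero,
    rankSum_eq_dStep_add a k h, List.length_append, List.length_singleton,
    show s.length + (k (m + 1) - (s.length + 1) - 1 + 1) = k (m + 1) - 1 by omega, add_assoc]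

lemma Gl_padSeq_two_append_zero (h : m < n) :
    Gl a 1 (padSeq k 2 (s ++ [0]) (m + 1) n) = Gl a 0 s - rankSum a k m n := by
  have hkm := hk (Nat.lt_add_one m)
  rw [Gl_padSeq_two a _ hk (by simp; omega) (show m + 1 ≤ n from h), padSeq_self,
    List.append_assoc, List.singleton_append, Gl_one_append_cons_replicate_two,
    rankSum_eq_dStep_add a k h, List.length_append, List.length_singleton,
    show s.length + (k (m + 1) - (s.length + 1) - 1) + 1 = k (m + 1) - 1 by omega]
  ring

end referenceGaps

section gapFamily

variable {k : ℕ → ℕ} {i0 : ℕ} {s : List ℕ} {m : ℕ}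

theorem gapFamily_induction {motive : ℕ → ℕ × List ℕ → Prop} (self : motive m (i0, s))
    (leftmost : ∀ n, m < n → motive n (i0, s ++ List.replicate (k n - k m) (2 * i0)))
    (children : ∀ l n q, m ≤ l → l < n → q ∈ gapFamily k i0 s m l → motive l q →
      motive n (1, q.2 ++ q.1 :: List.replicate (k n - k l - 1) 2) ∧
        motive n (0, q.2 ++ (q.1 + 1) :: List.replicate (k n - k l - 1) 0)) :
    ∀ n, m ≤ n → ∀ p ∈ gapFamily k i0 s m n, motive n p := by
  intro n
  induction n using Nat.strong_induction_on with
  | _ n ih =>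
    intro hmn p hp
    rcases hmn.eq_or_lt with rfl | hlt
    · rw [gapFamily, if_pos le_rfl, Set.mem_singleton_iff] at hp
      exact hp ▸ self
    · rw [gapFamily, if_neg hlt.not_ge] at hp
      simp only [Set.mem_union, Set.mem_singleton_iff, Set.mem_iUnion,
        Set.mem_insert_iff] at hp
      rcases hp with rfl | ⟨l, hml, hln, q, hq, rfl | rfl⟩
      · exact leftmost n hlt
      · exact (children l n q hml hln hq (ih l hln hml q hq)).1
      · exact (children l n q hml hln hq (ih l hln hml q hq)).2

lemma length_of_mem_gapFamily (hk : StrictMono k) (hs : s.length + 1 = k m) :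
    ∀ n, m ≤ n → ∀ p ∈ gapFamily k i0 s m n, p.2.length + 1 = k n := by
  apply gapFamily_induction
  · exact hs
  · intro n hn
    have hkmn := hk hn
    simp only [List.length_append, List.length_replicate]
    omega
  · intro l n q _ hln _ hq
    have hkln := hk hln
    simp only [List.length_append, List.length_cons, List.length_replicate]
    omega

theorem gapFamily_zero_location {a : ℕ → ℝ} (ha : ∀ n, 1 ≤ n → 0 < a n ∧ a n < 1)
    (hk : StrictMono k) (hka : ∀ q, m ≤ q → 1 / 3 < a (k q)) (hs : s.length + 1 = k m) :
    ∀ n, m ≤ n → ∀ p ∈ gapFamily k 0 s m n,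
      Gr a p.1 p.2 ≤ Jl a s + rankSum a k m n ∨
        (Gl a 0 s - rankSum a k m n ≤ Gl a p.1 p.2 ∧
          Gr a p.1 p.2 ≤ Gr a 0 s + rankSum a k m n) := by
  apply gapFamily_induction
  · simp
  · intro n hn
    have hkmn := hk hn
    left
    rw [mul_zero, Gr_zero_append_replicate_zero, show s.length + (k n - k m) = k n - 1 by omega]
    linarith [rankSum_add_dStep_le k ha le_rfl hn, rankSum_self a k m]
  · rintro l n ⟨j, t⟩ hml hln hq hparent
    have ht : t.length + 1 = k l := length_of_mem_gapFamily hk hs l hml _ hq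
    have hkln := hk hln
    have hproper : Gl a j t < Gr a j t := Gl_lt_Gr ha j t (ht ▸ hka l hml)
    have hgrow := rankSum_add_dStep_le k ha hml hln
    have hstep := dStep_nonneg ha (k n - 1)
    have hd := dSeq_pos ha (t.length + (k n - k l - 1) + 2)
    simp only [Gl_one_append_cons_replicate_two, Gr_one_append_cons_replicate_two,
      Gl_zero_append_succ_cons_replicate_zero, Gr_zero_append_succ_cons_replicate_zero,
      show t.length + (k n - k l - 1) + 1 = k n - 1 by omega]
    rcases hparent with hleft | ⟨hl, hr⟩
    · exact ⟨Or.inl (by linarith), Or.inl (by linarith)⟩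
    · exact ⟨Or.inr ⟨by linarith, by linarith⟩, Or.inr ⟨by linarith, by linarith⟩⟩

end gapFamily

theorem gap_location_left_family_general (a : ℕ → ℝ) (k : ℕ → ℕ)
    (ha : ∀ n, 1 ≤ n → 0 < a n ∧ a n < 1)
    (hk : IsGapEnum a k)
    (m : ℕ) (hm : 1 ≤ m)
    (s : List ℕ) (hslen : s.length = k m - 1)
    (n : ℕ) (hn : m < n) :
    ∀ p ∈ gapFamily k 0 s m n,
      Gr a p.1 p.2 ≤ Gr a 0 (padSeq k 0 (s ++ [0]) (m + 1) n) ∨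
        (Gl a 1 (padSeq k 2 (s ++ [0]) (m + 1) n) ≤ Gl a p.1 p.2 ∧
          Gl a p.1 p.2 < Gr a p.1 p.2 ∧
          Gr a p.1 p.2 ≤ Gr a 0 (padSeq k 0 s m n)) := by
  obtain ⟨hkmono, hkpos, -⟩ := hk
  have hka : ∀ q, m ≤ q → 1 / 3 < a (k q) := fun q hq => (hkpos q (hm.trans hq)).2
  have hs : s.length + 1 = k m := by have hk0m := (hkpos m hm).1; omega
  intro p hp
  have hproper : Gl a p.1 p.2 < Gr a p.1 p.2 :=
    Gl_lt_Gr ha _ _ (length_of_mem_gapFamily hkmono hs n hn.le p hp ▸ hka n hn.le)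
  rw [Gr_padSeq_zero_append_zero a hkmono hs hn, Gl_padSeq_two_append_zero a hkmono hs hn,
    Gr_padSeq_zero_eq_Gr_add_rankSum a hkmono hs hn.le]
  rcases gapFamily_zero_location ha hkmono hka hs n hn.le p hp with hleft | ⟨hl, hr⟩
  · exact Or.inl hleft
  · exact Or.inr ⟨hl, hproper, hr⟩

/-- Lemma: for `s ∈ {0,1,2}^{k_m - 1}`, `n > m` and every gap `G = G^{p.1}_{p.2} ∈ 𝒢⁰_s(n)`:
either `r(G) ≤ r(G⁰(s⌢0, n))`, or `l(G¹(s⌢0, n)) ≤ l(G) < r(G) ≤ r(G⁰(s, n))`. -/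
theorem gap_location_left_family (a : ℕ → ℝ) (k : ℕ → ℕ)
    (ha : ∀ n, 1 ≤ n → 0 < a n ∧ a n < 1)
    (hinf : {n : ℕ | 1 ≤ n ∧ 1 / 3 < a n}.Infinite)
    (hk0 : a (k 0 + 1) < 1 / 3)
    (hk : IsGapEnum a k)
    (m : ℕ) (hm : 1 ≤ m)
    (s : List ℕ) (hs2 : ∀ x ∈ s, x ≤ 2) (hslen : s.length = k m - 1)
    (n : ℕ) (hn : m < n) :
    ∀ p ∈ gapFamily k 0 s m n,
      Gr a p.1 p.2 ≤ Gr a 0 (padSeq k 0 (s ++ [0]) (m + 1) n) ∨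
        (Gl a 1 (padSeq k 2 (s ++ [0]) (m + 1) n) ≤ Gl a p.1 p.2 ∧
          Gl a p.1 p.2 < Gr a p.1 p.2 ∧
          Gr a p.1 p.2 ≤ Gr a 0 (padSeq k 0 s m n)) :=
  gap_location_left_family_general a k ha hk m hm s hslen n hn

end CCS
end
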